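/- arXiv:0911.4727 — 2 statements merged into one kernel-verified Lean document; each statement's English description precedes it below -/
import Mathlib

section
/- Let P be a coherent lower prevision on G(X^N), i.e., P = P_D for some coherent set D of gambles on X^N, where P_D(f) := sup{μ ∈ ℝ : f − μ ∈ D}, and let P̄(f) := −P(−f) be its conjugate upper prevision. Then the following are equivalent: (i) P is exchangeable, i.e., P = P_D for some coherent and exchangeable set D of gambles on X^N; (ii) P(f) = P̄(f) = 0 for all f ∈ W_{P_N}; (iii) P(f) = P̄(f) = 0 for all f ∈ W_{A_N}. -/
variable {X : Type*} [Fintype X] [DecidableEq X] [Nonempty X]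

/-- `ex^N(f)`: the uniform average of all permuted versions `π^t f` of `f`,
where `(π^t f)(x) = f(x ∘ π)`. -/
noncomputable def exg {X : Type*} (N : ℕ) (f : (Fin N → X) → ℝ) : (Fin N → X) → ℝ :=
  fun x => (∑ π : Equiv.Perm (Fin N), f (x ∘ π)) / (N.factorial : ℝ)

/-- `W_{A_N}`: the linear span of the gambles `f - π^t f`, which is the kernel of
the projection operator `ex^N`. -/
def WA (X : Type*) (N : ℕ) : Set ((Fin N → X) → ℝ) := {f | exg N f = 0}

/-- A coherent set of desirable gambles on a set of possibilities `Y`. -/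
def Coherent {Y : Type*} (D : Set (Y → ℝ)) : Prop :=
  (0 : Y → ℝ) ∉ D ∧ (∀ f : Y → ℝ, 0 ≤ f → f ≠ 0 → f ∈ D) ∧
  (∀ f ∈ D, ∀ c : ℝ, 0 < c → c • f ∈ D) ∧ ∀ f ∈ D, ∀ g ∈ D, f + g ∈ D

/-- A set of desirable gambles on `X^N` is exchangeable if `W_{A_N} + D ⊆ D`. -/
def Exchangeable (X : Type*) (N : ℕ) (D : Set ((Fin N → X) → ℝ)) : Prop :=
  ∀ f ∈ WA X N, ∀ g ∈ D, f + g ∈ D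

/-- `W_{P_N}`: the set of gambles of the form `f - π^t f`. -/
def WP (X : Type*) (N : ℕ) : Set ((Fin N → X) → ℝ) :=
  {g | ∃ (f : (Fin N → X) → ℝ) (π : Equiv.Perm (Fin N)), g = f - fun x => f (x ∘ π)}

/-- The lower prevision associated with a set `A` of gambles:
`P_A(f) = sup {μ : f - μ ∈ A}`. -/
noncomputable def lpr {Y : Type*} (A : Set (Y → ℝ)) (f : Y → ℝ) : ℝ :=
  sSup {μ : ℝ | (f - fun _ => μ) ∈ A}

/-!
A coherent `D` makes `P = lpr D` a superadditive, positively homogeneous, constant-additive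
functional with `P f ≤ -P (-f)`. If `D` is exchangeable, then `w + μ ∈ D` for `w ∈ W_{A_N}` and
every constant `μ > 0`, so `P w ≥ 0`, and likewise `P (-w) ≥ 0`; hence `P = -P(-·) = 0` on
`W_{A_N} ⊇ W_{P_N}`. Conversely, every `w ∈ W_{A_N}` satisfies `N! • w = ∑_π (w - π^t w)`, so by
superadditivity vanishing on `W_{P_N}` gives `P ≥ 0`, hence `P = 0`, on `W_{A_N}`. Then
`{f | P f > 0} ∪ (W_{A_N} + G_{>0})` is coherent, exchangeable, and has lower prevision `P`;
it avoids `0` because `ex^N` maps positive gambles to positive gambles, so `W_{A_N}` contains none.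
-/

namespace Coherent

variable {Y : Type*} {A : Set (Y → ℝ)} {f g : Y → ℝ} {μ : ℝ}

theorem sub_const_eq_add_const (f : Y → ℝ) (μ : ℝ) : (f - fun _ => μ) = f + fun _ => -μ :=
  sub_eq_add_neg _ _

theorem zero_notMem (hA : Coherent A) : (0 : Y → ℝ) ∉ A := hA.1

theorem mem_of_pos (hA : Coherent A) (hf : 0 < f) : f ∈ A := hA.2.1 f hf.le hf.ne'

theorem smul_mem (hA : Coherent A) (hf : f ∈ A) {c : ℝ} (hc : 0 < c) : c • f ∈ A :=
  hA.2.2.1 f hf c hc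

theorem add_mem (hA : Coherent A) (hf : f ∈ A) (hg : g ∈ A) : f + g ∈ A := hA.2.2.2 f hf g hg

theorem not_le_zero_of_mem (hA : Coherent A) (hf : f ∈ A) : ¬f ≤ 0 := fun hle => by
  rcases hle.lt_or_eq with hlt | rfl
  · exact hA.zero_notMem (by simpa using hA.add_mem hf (hA.mem_of_pos (neg_pos.2 hlt)))
  · exact hA.zero_notMem hf

theorem exists_lt_of_sub_const_mem (hA : Coherent A) (h : (f - fun _ => μ) ∈ A) :
    ∃ y, μ < f y := by
  by_contra! hle
  exact hA.not_le_zero_of_mem h fun y => sub_nonpos.2 (hle y)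

theorem sub_const_mem_of_forall_lt [Nonempty Y] (hA : Coherent A) (h : ∀ y, μ < f y) :
    (f - fun _ => μ) ∈ A :=
  hA.mem_of_pos (lt_of_strongLT fun y => sub_pos.2 (h y))

variable [Finite Y]

theorem bddAbove_setOf_sub_const_mem (hA : Coherent A) (f : Y → ℝ) :
    BddAbove {μ : ℝ | (f - fun _ => μ) ∈ A} := by
  obtain ⟨c, hc⟩ := (Set.finite_range f).bddAbove
  refine ⟨c, fun μ hμ => ?_⟩
  obtain ⟨y, hy⟩ := hA.exists_lt_of_sub_const_mem hμ
  exact hy.le.trans (hc ⟨y, rfl⟩)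

theorem le_lpr (hA : Coherent A) (h : (f - fun _ => μ) ∈ A) : μ ≤ lpr A f :=
  le_csSup (hA.bddAbove_setOf_sub_const_mem f) h

theorem le_lpr_of_forall_lt (hA : Coherent A) (h : ∀ ν < μ, (f - fun _ => ν) ∈ A) :
    μ ≤ lpr A f :=
  le_of_forall_lt_imp_le_of_dense fun ν hν => hA.le_lpr (h ν hν)

variable [Nonempty Y]

theorem nonempty_setOf_sub_const_mem (hA : Coherent A) (f : Y → ℝ) :
    {μ : ℝ | (f - fun _ => μ) ∈ A}.Nonempty := by
  obtain ⟨c, hc⟩ := (Set.finite_range f).bddBelow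
  exact ⟨c - 1, hA.sub_const_mem_of_forall_lt fun y => by linarith [hc ⟨y, rfl⟩]⟩

theorem lpr_le {c : ℝ} (hA : Coherent A) (h : ∀ μ, (f - fun _ => μ) ∈ A → μ ≤ c) :
    lpr A f ≤ c :=
  csSup_le (hA.nonempty_setOf_sub_const_mem f) h

theorem sub_const_mem_of_lt_lpr (hA : Coherent A) (h : μ < lpr A f) : (f - fun _ => μ) ∈ A := by
  obtain ⟨ν, hν, hμν⟩ := exists_lt_of_lt_csSup (hA.nonempty_setOf_sub_const_mem f) h
  have hgap : (fun _ => ν - μ) ∈ A := hA.mem_of_pos (lt_of_strongLT fun _ => sub_pos.2 hμν)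
  convert hA.add_mem hν hgap using 1
  ext; simp

theorem lpr_le_of_forall_le {c : ℝ} (hA : Coherent A) (h : ∀ y, f y ≤ c) : lpr A f ≤ c :=
  hA.lpr_le fun _ hμ => let ⟨y, hy⟩ := hA.exists_lt_of_sub_const_mem hμ; hy.le.trans (h y)

theorem le_lpr_of_forall_le {c : ℝ} (hA : Coherent A) (h : ∀ y, c ≤ f y) : c ≤ lpr A f :=
  hA.le_lpr_of_forall_lt fun _ hν => hA.sub_const_mem_of_forall_lt fun y => hν.trans_le (h y)

theorem lpr_nonneg (hA : Coherent A) (hf : 0 ≤ f) : 0 ≤ lpr A f := hA.le_lpr_of_forall_le hf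

theorem lpr_const (hA : Coherent A) (c : ℝ) : lpr A (fun _ => c) = c :=
  le_antisymm (hA.lpr_le_of_forall_le fun _ => le_rfl) (hA.le_lpr_of_forall_le fun _ => le_rfl)

theorem lpr_zero (hA : Coherent A) : lpr A 0 = 0 := hA.lpr_const 0

theorem lpr_add_lpr_le (hA : Coherent A) (f g : Y → ℝ) : lpr A f + lpr A g ≤ lpr A (f + g) :=
  add_le_of_forall_lt fun μ hμ ν hν => hA.le_lpr <| by
    convert hA.add_mem (hA.sub_const_mem_of_lt_lpr hμ) (hA.sub_const_mem_of_lt_lpr hν) using 1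
    ext; simp; ring

theorem mul_lpr_le_lpr_smul (hA : Coherent A) {c : ℝ} (hc : 0 < c) (f : Y → ℝ) :
    c * lpr A f ≤ lpr A (c • f) :=
  le_of_forall_lt_imp_le_of_dense fun μ hμ => hA.le_lpr <| by
    have hf := hA.sub_const_mem_of_lt_lpr (μ := μ / c) (by rwa [div_lt_iff₀' hc])
    convert hA.smul_mem hf hc using 1
    ext; simp [mul_sub, mul_div_cancel₀ _ hc.ne']

theorem lpr_smul (hA : Coherent A) {c : ℝ} (hc : 0 < c) (f : Y → ℝ) :
    lpr A (c • f) = c * lpr A f := by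
  refine le_antisymm ?_ (hA.mul_lpr_le_lpr_smul hc f)
  have h := hA.mul_lpr_le_lpr_smul (inv_pos.2 hc) (c • f)
  rwa [inv_smul_smul₀ hc.ne', inv_mul_le_iff₀ hc] at h

theorem lpr_sub_const (hA : Coherent A) (f : Y → ℝ) (μ : ℝ) :
    lpr A (f - fun _ => μ) = lpr A f - μ := by
  have hle := hA.lpr_add_lpr_le (f - fun _ => μ) (fun _ => μ)
  have hge := hA.lpr_add_lpr_le f (fun _ => -μ)
  rw [sub_add_cancel, hA.lpr_const] at hle
  rw [hA.lpr_const, ← sub_const_eq_add_const] at hge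
  exact le_antisymm (by linarith) (by linarith)

theorem lpr_le_neg_lpr_neg (hA : Coherent A) (f : Y → ℝ) : lpr A f ≤ -lpr A (-f) := by
  have h := hA.lpr_add_lpr_le f (-f)
  rw [add_neg_cancel, hA.lpr_zero] at h
  linarith

theorem lpr_eq_zero_of_nonneg (hA : Coherent A) (h : 0 ≤ lpr A f) (hneg : 0 ≤ lpr A (-f)) :
    lpr A f = 0 :=
  le_antisymm (by linarith [hA.lpr_le_neg_lpr_neg f]) h

theorem lpr_nonneg_of_forall_add_mem (hA : Coherent A) (h : ∀ g ∈ A, f + g ∈ A) :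
    0 ≤ lpr A f :=
  hA.le_lpr_of_forall_lt fun ν hν => by
    rw [sub_const_eq_add_const]
    exact h _ (hA.mem_of_pos (lt_of_strongLT fun _ => neg_pos.2 hν))

theorem lpr_eq_zero_of_forall_add_mem (hA : Coherent A) (h : ∀ g ∈ A, f + g ∈ A)
    (hneg : ∀ g ∈ A, -f + g ∈ A) : lpr A f = 0 :=
  hA.lpr_eq_zero_of_nonneg (hA.lpr_nonneg_of_forall_add_mem h)
    (hA.lpr_nonneg_of_forall_add_mem hneg)

end Coherent

section StrictDesirable

variable {Y : Type*} {A : Set (Y → ℝ)} {V : Submodule ℝ (Y → ℝ)}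

/-- `{f | P_A f > 0} ∪ (V + G_{>0})`; `v < f` is the pointwise order, i.e. `f - v ≥ 0`, `f ≠ v`. -/
def strictDesirable (A : Set (Y → ℝ)) (V : Submodule ℝ (Y → ℝ)) : Set (Y → ℝ) :=
  {f | 0 < lpr A f ∨ ∃ v ∈ V, v < f}

variable [Finite Y] [Nonempty Y]

theorem lpr_nonneg_of_mem_strictDesirable (hA : Coherent A) (hV : ∀ v ∈ V, lpr A v = 0)
    {f : Y → ℝ} (hf : f ∈ strictDesirable A V) : 0 ≤ lpr A f := by
  rcases hf with hf | ⟨v, hv, hvf⟩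
  · exact hf.le
  · calc 0 = lpr A v + 0 := by rw [hV v hv, add_zero]
      _ ≤ lpr A v + lpr A (f - v) := by gcongr; exact hA.lpr_nonneg (sub_nonneg.2 hvf.le)
      _ ≤ lpr A f := by simpa using hA.lpr_add_lpr_le v (f - v)

theorem add_mem_strictDesirable (hA : Coherent A) (hV : ∀ v ∈ V, lpr A v = 0) {v f : Y → ℝ}
    (hv : v ∈ V) (hf : f ∈ strictDesirable A V) : v + f ∈ strictDesirable A V := by
  rcases hf with hf | ⟨w, hw, hwf⟩
  · left
    linarith [hA.lpr_add_lpr_le v f, hV v hv]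
  · exact Or.inr ⟨v + w, V.add_mem hv hw, add_lt_add_right hwf v⟩

theorem coherent_strictDesirable (hA : Coherent A) (hV : ∀ v ∈ V, lpr A v = 0)
    (hVpos : ∀ v ∈ V, ¬0 < v) : Coherent (strictDesirable A V) := by
  refine ⟨?_, fun f hf hf0 => Or.inr ⟨0, V.zero_mem, lt_of_le_of_ne hf hf0.symm⟩, ?_, ?_⟩
  · rintro (h | ⟨v, hv, hv0⟩)
    · exact h.ne' hA.lpr_zero
    · exact hVpos (-v) (V.neg_mem hv) (neg_pos.2 hv0)
  · rintro f (hf | ⟨v, hv, hvf⟩) c hc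
    · exact Or.inl (by rw [hA.lpr_smul hc]; positivity)
    · exact Or.inr ⟨c • v, V.smul_mem c hv, smul_lt_smul_of_pos_left hvf hc⟩
  · intro f hf g hg
    have hPf := lpr_nonneg_of_mem_strictDesirable hA hV hf
    have hPg := lpr_nonneg_of_mem_strictDesirable hA hV hg
    rcases hf with hf | ⟨v, hv, hvf⟩
    · exact Or.inl (by linarith [hA.lpr_add_lpr_le f g])
    rcases hg with hg | ⟨w, hw, hwg⟩
    · exact Or.inl (by linarith [hA.lpr_add_lpr_le f g])
    · exact Or.inr ⟨v + w, V.add_mem hv hw, add_lt_add hvf hwg⟩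

theorem lpr_strictDesirable (hA : Coherent A) (hV : ∀ v ∈ V, lpr A v = 0)
    (hVpos : ∀ v ∈ V, ¬0 < v) : lpr (strictDesirable A V) = lpr A := by
  have hS := coherent_strictDesirable hA hV hVpos
  funext f
  refine le_antisymm (hS.lpr_le fun μ hμ => ?_) (hS.le_lpr_of_forall_lt fun μ hμ => Or.inl ?_)
  · have h := lpr_nonneg_of_mem_strictDesirable hA hV hμ
    rw [hA.lpr_sub_const] at h
    linarith
  · rw [hA.lpr_sub_const]
    linarith

end StrictDesirable

section Symmetrization

variable {α : Type*} {N : ℕ}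

noncomputable def exgLinear (α : Type*) (N : ℕ) :
    ((Fin N → α) → ℝ) →ₗ[ℝ] (Fin N → α) → ℝ :=
  (N.factorial : ℝ)⁻¹ • ∑ π : Equiv.Perm (Fin N), LinearMap.funLeft ℝ ℝ (fun x => x ∘ π)

theorem exgLinear_apply (f : (Fin N → α) → ℝ) : exgLinear α N f = exg N f := by
  ext x
  simp [exgLinear, exg, LinearMap.funLeft_apply, div_eq_inv_mul]

theorem WA_eq_ker : WA α N = LinearMap.ker (exgLinear α N) := by
  ext f
  simp [WA, exgLinear_apply]

theorem neg_mem_WA {f : (Fin N → α) → ℝ} (hf : f ∈ WA α N) : -f ∈ WA α N := by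
  rw [WA_eq_ker] at *
  exact neg_mem hf

theorem exg_comp_perm (f : (Fin N → α) → ℝ) (π : Equiv.Perm (Fin N)) :
    exg N (fun x => f (x ∘ π)) = exg N f := by
  ext x
  simp only [exg]
  congr 1
  exact Fintype.sum_equiv (Equiv.mulRight π) _ _ fun σ => rfl

theorem WP_subset_WA : WP α N ⊆ WA α N := by
  rintro _ ⟨f, π, rfl⟩
  rw [WA_eq_ker, SetLike.mem_coe, LinearMap.mem_ker, map_sub, exgLinear_apply, exgLinear_apply,
    exg_comp_perm, sub_self]

theorem exg_pos {f : (Fin N → α) → ℝ} (hf : 0 < f) : 0 < exg N f := by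
  obtain ⟨hf0, x, hx⟩ := Pi.lt_def.1 hf
  have hsum_nonneg : ∀ y, 0 ≤ ∑ π : Equiv.Perm (Fin N), f (y ∘ π) := fun y =>
    Finset.sum_nonneg fun π _ => hf0 _
  have hsum_pos : 0 < ∑ π : Equiv.Perm (Fin N), f (x ∘ π) :=
    Finset.sum_pos' (fun π _ => hf0 _) ⟨1, Finset.mem_univ _, by simpa using hx⟩
  exact Pi.lt_def.2 ⟨fun y => div_nonneg (hsum_nonneg y) (by positivity),
    x, div_pos hsum_pos (by positivity)⟩

theorem not_pos_of_mem_WA {f : (Fin N → α) → ℝ} (hf : f ∈ WA α N) : ¬0 < f := fun hpos =>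
  (exg_pos hpos).ne' hf

theorem sum_sub_comp_perm_of_mem_WA {w : (Fin N → α) → ℝ} (hw : w ∈ WA α N) :
    ∑ π : Equiv.Perm (Fin N), (w - fun x => w (x ∘ π)) = (N.factorial : ℝ) • w := by
  have hsum : ∀ x, ∑ π : Equiv.Perm (Fin N), w (x ∘ π) = 0 := fun x => by
    simpa [exg, Nat.factorial_ne_zero] using congrFun hw x
  ext x
  simp [Finset.sum_apply, Finset.sum_sub_distrib, hsum x, Fintype.card_perm]

variable [Finite α] [Nonempty α] {D : Set ((Fin N → α) → ℝ)}

theorem lpr_nonneg_of_mem_WA (hD : Coherent D) (hWP : ∀ f ∈ WP α N, lpr D f = 0)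
    {w : (Fin N → α) → ℝ} (hw : w ∈ WA α N) : 0 ≤ lpr D w := by
  have hfac : (0 : ℝ) < N.factorial := by positivity
  have h : 0 ≤ lpr D ((N.factorial : ℝ) • w) := by
    rw [← sum_sub_comp_perm_of_mem_WA hw]
    exact Finset.sum_induction _ (fun f => 0 ≤ lpr D f)
      (fun f g hf hg => (add_nonneg hf hg).trans (hD.lpr_add_lpr_le f g)) hD.lpr_zero.ge
      fun π _ => (hWP _ ⟨w, π, rfl⟩).ge
  rw [hD.lpr_smul hfac] at h
  exact (mul_nonneg_iff_of_pos_left hfac).1 h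

theorem lpr_eq_zero_of_mem_WA (hD : Coherent D) (hWP : ∀ f ∈ WP α N, lpr D f = 0)
    {w : (Fin N → α) → ℝ} (hw : w ∈ WA α N) : lpr D w = 0 :=
  hD.lpr_eq_zero_of_nonneg (lpr_nonneg_of_mem_WA hD hWP hw)
    (lpr_nonneg_of_mem_WA hD hWP (neg_mem_WA hw))

theorem lpr_eq_zero_of_exchangeable (hD : Coherent D) (hexch : Exchangeable α N D)
    {w : (Fin N → α) → ℝ} (hw : w ∈ WA α N) : lpr D w = 0 :=
  hD.lpr_eq_zero_of_forall_add_mem (hexch w hw) (hexch (-w) (neg_mem_WA hw))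

theorem exists_exchangeable_lpr_eq (hD : Coherent D) (hWA : ∀ w ∈ WA α N, lpr D w = 0) :
    ∃ D' : Set ((Fin N → α) → ℝ), Coherent D' ∧ Exchangeable α N D' ∧ lpr D = lpr D' := by
  set V := LinearMap.ker (exgLinear α N)
  have hV : ∀ v ∈ V, lpr D v = 0 := fun v hv => hWA v (by rwa [WA_eq_ker])
  have hVpos : ∀ v ∈ V, ¬0 < v := fun v hv => not_pos_of_mem_WA (by rwa [WA_eq_ker])
  refine ⟨strictDesirable D V, coherent_strictDesirable hD hV hVpos, fun v hv g hg => ?_,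
    (lpr_strictDesirable hD hV hVpos).symm⟩
  rw [WA_eq_ker] at hv
  exact add_mem_strictDesirable hD hV hv hg

end Symmetrization

theorem exchangeability_of_lower_prevision_general {N : ℕ}
    (P : ((Fin N → X) → ℝ) → ℝ)
    (hP : ∃ D : Set ((Fin N → X) → ℝ), Coherent D ∧ P = lpr D) :
    ((∃ D : Set ((Fin N → X) → ℝ), Coherent D ∧ Exchangeable X N D ∧ P = lpr D) ↔
      ∀ f ∈ WP X N, P f = 0 ∧ -P (-f) = 0) ∧
    ((∃ D : Set ((Fin N → X) → ℝ), Coherent D ∧ Exchangeable X N D ∧ P = lpr D) ↔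
      ∀ f ∈ WA X N, P f = 0 ∧ -P (-f) = 0) := by
  obtain ⟨D, hD, rfl⟩ := hP
  have vanish_of_exch : (∃ D' : Set ((Fin N → X) → ℝ), Coherent D' ∧ Exchangeable X N D' ∧
      lpr D = lpr D') → ∀ f ∈ WA X N, lpr D f = 0 ∧ -lpr D (-f) = 0 := by
    rintro ⟨D', hD', hexch, hDD'⟩ f hf
    rw [hDD', lpr_eq_zero_of_exchangeable hD' hexch hf,
      lpr_eq_zero_of_exchangeable hD' hexch (neg_mem_WA hf), neg_zero]
    exact ⟨rfl, rfl⟩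
  have exch_of_vanish (h : ∀ f ∈ WP X N, lpr D f = 0) :
      ∃ D' : Set ((Fin N → X) → ℝ), Coherent D' ∧ Exchangeable X N D' ∧ lpr D = lpr D' :=
    exists_exchangeable_lpr_eq hD fun w hw => lpr_eq_zero_of_mem_WA hD h hw
  exact ⟨⟨fun h f hf => vanish_of_exch h f (WP_subset_WA hf),
      fun h => exch_of_vanish fun f hf => (h f hf).1⟩,
    ⟨vanish_of_exch, fun h => exch_of_vanish fun f hf => (h f (WP_subset_WA hf)).1⟩⟩

theorem exchangeability_of_lower_prevision {N : ℕ} (hN : 1 ≤ N)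
    (P : ((Fin N → X) → ℝ) → ℝ)
    (hP : ∃ D : Set ((Fin N → X) → ℝ), Coherent D ∧ P = lpr D) :
    ((∃ D : Set ((Fin N → X) → ℝ), Coherent D ∧ Exchangeable X N D ∧ P = lpr D) ↔
      ∀ f ∈ WP X N, P f = 0 ∧ -P (-f) = 0) ∧
    ((∃ D : Set ((Fin N → X) → ℝ), Coherent D ∧ Exchangeable X N D ∧ P = lpr D) ↔
      ∀ f ∈ WA X N, P f = 0 ∧ -P (-f) = 0) :=
  exchangeability_of_lower_prevision_general P hP
end

section
/- For A ⊆ G(X^N) define the exchangeable natural extension E_ex(A) as the intersection of all coherent and exchangeable sets of gambles on X^N that include A (taken to be G(X^N) when no such set exists). Then the following are equivalent: (i) A avoids non-positivity under exchangeability; (ii) A is included in some coherent and exchangeable set of gambles; (iii) E_ex(A) ≠ G(X^N); (iv) E_ex(A) is a coherent and exchangeable set of gambles; (v) E_ex(A) is the smallest coherent and exchangeable set of gambles that includes A. When these hold, E_ex(A) = posi(W_{A_N} + ({f ∈ G(X^N) : f > 0} ∪ A)) = W_{A_N} + E(A), where E(A) := posi({f ∈ G(X^N) : f > 0} ∪ A)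 is the natural extension of A. -/
/-!
Let `K = posi(W_{A_N} + ({f > 0} ∪ A))`. It contains `{f > 0} ∪ A`, it is invariant under
adding elements of the linear space `W_{A_N}`, and it lies inside every coherent exchangeable
`D ⊇ A`. Avoiding non-positivity under exchangeability says precisely that `K` contains no gamble
`≤ 0`, and this makes `K` coherent; `K` is then the least coherent exchangeable set
including `A`, hence equal to the intersection `E_ex(A)`. Conversely a coherent `D` contains no
`g ≤ 0`: otherwise `g = 0` or `-g > 0`, and in both cases `0 ∈ D`. Finally `K = W_{A_N} + E(A)`
because positive combinations distribute over the sum with a linear space.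
-/

variable {X : Type*} [Fintype X] [DecidableEq X] [Nonempty X]

/-- The positive hull of a set of gambles: all finite strictly positive linear combinations. -/
def posi {Y : Type*} (A : Set (Y → ℝ)) : Set (Y → ℝ) :=
  {g | ∃ n : ℕ, 0 < n ∧ ∃ (c : Fin n → ℝ) (f : Fin n → Y → ℝ),
    (∀ k, 0 < c k) ∧ (∀ k, f k ∈ A) ∧ g = ∑ k, c k • f k}

open Pointwise

/-- `A` avoids non-positivity under exchangeability: no element of
`posi(({f > 0} ∪ A) + W_{A_N})` is pointwise `≤ 0`. -/
def ANPE (X : Type*) (N : ℕ) (A : Set ((Fin N → X) → ℝ)) : Prop :=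
  ∀ g ∈ posi (({f : (Fin N → X) → ℝ | 0 ≤ f ∧ f ≠ 0} ∪ A) + WA X N), ¬ g ≤ 0

/-- The natural extension of `A`: `posi({f > 0} ∪ A)`. -/
def natex {Y : Type*} (A : Set (Y → ℝ)) : Set (Y → ℝ) :=
  posi ({f : Y → ℝ | 0 ≤ f ∧ f ≠ 0} ∪ A)

/-- The exchangeable natural extension of `A`: the intersection of all coherent and
exchangeable sets of desirable gambles including `A` (the whole space if there are none). -/
def exnatex (X : Type*) (N : ℕ) (A : Set ((Fin N → X) → ℝ)) : Set ((Fin N → X) → ℝ) :=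
  ⋂₀ {D | Coherent D ∧ Exchangeable X N D ∧ A ⊆ D}


section Posi

variable {Y : Type*} {A B D : Set (Y → ℝ)}

lemma subset_posi : A ⊆ posi A := fun a ha =>
  ⟨1, one_pos, fun _ => 1, fun _ => a, fun _ => one_pos, fun _ => ha, by simp⟩

lemma smul_mem_posi {c : ℝ} (hc : 0 < c) {g : Y → ℝ} (hg : g ∈ posi A) : c • g ∈ posi A := by
  obtain ⟨n, hn, d, f, hd, hf, rfl⟩ := hg
  exact ⟨n, hn, fun k => c * d k, f, fun k => mul_pos hc (hd k), hf, by
    simp only [Finset.smul_sum, mul_smul]⟩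

lemma add_mem_posi {g h : Y → ℝ} (hg : g ∈ posi A) (hh : h ∈ posi A) : g + h ∈ posi A := by
  obtain ⟨n, hn, c, f, hc, hf, rfl⟩ := hg
  obtain ⟨m, -, d, e, hd, he, rfl⟩ := hh
  refine ⟨n + m, by omega, Fin.append c d, Fin.append f e,
    Fin.addCases (by simpa using hc) (by simpa using hd),
    Fin.addCases (by simpa using hf) (by simpa using he), ?_⟩
  simp [Fin.sum_univ_add]

lemma posi_subset (hAD : A ⊆ D) (hsmul : ∀ f ∈ D, ∀ c : ℝ, 0 < c → c • f ∈ D)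
    (hadd : ∀ f ∈ D, ∀ g ∈ D, f + g ∈ D) : posi A ⊆ D := by
  rintro g ⟨n, hn, c, f, hc, hf, rfl⟩
  have : Nonempty (Fin n) := ⟨⟨0, hn⟩⟩
  exact Finset.sum_induction_nonempty _ (· ∈ D) (fun a b ha hb => hadd a ha b hb)
    Finset.univ_nonempty (fun k _ => hsmul (f k) (hAD (hf k)) (c k) (hc k))

lemma posi_mono (hAB : A ⊆ B) : posi A ⊆ posi B :=
  posi_subset (hAB.trans subset_posi) (fun _ hf _ hc => smul_mem_posi hc hf)
    (fun _ hf _ hg => add_mem_posi hf hg)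

end Posi

section Coherent

variable {Y : Type*} {S D : Set (Y → ℝ)}

lemma Coherent.not_le_zero (hD : Coherent D) {g : Y → ℝ} (hg : g ∈ D) : ¬ g ≤ 0 := by
  intro hg0
  by_cases hg' : g = 0
  · exact hD.1 (hg' ▸ hg)
  · have hneg : -g ∈ D := hD.2.1 (-g) (neg_nonneg.2 hg0) (neg_ne_zero.2 hg')
    exact hD.1 (add_neg_cancel g ▸ hD.2.2.2 g hg (-g) hneg)

lemma Coherent.ne_univ (hD : Coherent D) : D ≠ Set.univ :=
  fun h => hD.1 (h ▸ Set.mem_univ 0)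

lemma coherent_posi (hS : {f | 0 ≤ f ∧ f ≠ 0} ⊆ S) (h : ∀ g ∈ posi S, ¬ g ≤ 0) :
    Coherent (posi S) :=
  ⟨fun h0 => h 0 h0 le_rfl, fun _ hf hf0 => subset_posi (hS ⟨hf, hf0⟩),
    fun _ hf _ hc => smul_mem_posi hc hf, fun _ hf _ hg => add_mem_posi hf hg⟩

end Coherent

section Invariant

variable {Y : Type*} (W : Submodule ℝ (Y → ℝ)) {S D : Set (Y → ℝ)}

lemma add_mem_posi_add {w g : Y → ℝ} (hw : w ∈ W) (hg : g ∈ posi ((W : Set (Y → ℝ)) + S)) :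
    w + g ∈ posi ((W : Set (Y → ℝ)) + S) := by
  set K := posi ((W : Set (Y → ℝ)) + S)
  -- induction over positive combinations, by minimality of `posi`
  suffices K ⊆ {g | g ∈ K ∧ ∀ w ∈ W, w + g ∈ K} from (this hg).2 w hw
  refine posi_subset ?_ ?_ ?_
  · rintro _ ⟨v, hv, s, hs, rfl⟩
    exact ⟨subset_posi ⟨v, hv, s, hs, rfl⟩,
      fun w hw => subset_posi ⟨w + v, W.add_mem hw hv, s, hs, add_assoc w v s⟩⟩
  · rintro f ⟨hf, hfW⟩ c hc
    refine ⟨smul_mem_posi hc hf, fun w hw => ?_⟩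
    have := smul_mem_posi hc (hfW (c⁻¹ • w) (W.smul_mem _ hw))
    rwa [smul_add, smul_inv_smul₀ hc.ne'] at this
  · rintro f ⟨hf, hfW⟩ g ⟨hg, -⟩
    exact ⟨add_mem_posi hf hg, fun w hw => add_assoc w f g ▸ add_mem_posi (hfW w hw) hg⟩

lemma posi_add_eq : posi ((W : Set (Y → ℝ)) + S) = W + posi S := by
  refine (posi_subset ?_ ?_ ?_).antisymm ?_
  · exact Set.add_subset_add_left subset_posi
  · rintro _ ⟨w, hw, p, hp, rfl⟩ c hc
    exact ⟨c • w, W.smul_mem c hw, c • p, smul_mem_posi hc hp, (smul_add c w p).symm⟩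
  · rintro _ ⟨w, hw, p, hp, rfl⟩ _ ⟨w', hw', p', hp', rfl⟩
    exact ⟨w + w', W.add_mem hw hw', p + p', add_mem_posi hp hp', add_add_add_comm w w' p p'⟩
  · rintro _ ⟨w, hw, p, hp, rfl⟩
    exact add_mem_posi_add W hw (posi_mono (Set.subset_add_right S W.zero_mem) hp)

lemma Coherent.posi_add_subset (hD : Coherent D) (hDW : ∀ w ∈ W, ∀ g ∈ D, w + g ∈ D)
    (hS : S ⊆ D) : posi ((W : Set (Y → ℝ)) + S) ⊆ D := by
  refine posi_subset ?_ hD.2.2.1 hD.2.2.2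
  rintro _ ⟨w, hw, s, hs, rfl⟩
  exact hDW w hw s (hS hs)

end Invariant

section Exchangeable

noncomputable def exgLinearMap (α : Type*) (N : ℕ) :
    ((Fin N → α) → ℝ) →ₗ[ℝ] (Fin N → α) → ℝ where
  toFun := exg N
  map_add' f g := by
    funext x
    simp only [exg, Pi.add_apply, Finset.sum_add_distrib, add_div]
  map_smul' c f := by
    funext x
    simp only [exg, Pi.smul_apply, smul_eq_mul, ← Finset.mul_sum, mul_div_assoc, RingHom.id_apply]

/-- Its carrier is `WA α N` by definition, so membership in either can be used for the other. -/
noncomputable def waSubmodule (α : Type*) (N : ℕ) : Submodule ℝ ((Fin N → α) → ℝ) :=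
  LinearMap.ker (exgLinearMap α N)

variable {α : Type*} {N : ℕ} {A : Set ((Fin N → α) → ℝ)}

lemma anpe_iff : ANPE α N A ↔ ∀ g ∈ posi (WA α N + ({f | 0 ≤ f ∧ f ≠ 0} ∪ A)), ¬ g ≤ 0 := by
  rw [ANPE, add_comm]

lemma posi_wa_add_subset {D : Set ((Fin N → α) → ℝ)} (hD : Coherent D)
    (hDe : Exchangeable α N D) (hA : A ⊆ D) :
    posi (WA α N + ({f | 0 ≤ f ∧ f ≠ 0} ∪ A)) ⊆ D :=
  hD.posi_add_subset (waSubmodule α N) hDe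
    (Set.union_subset (fun f hf => hD.2.1 f hf.1 hf.2) hA)

lemma anpe_of_exists (h : ∃ D, Coherent D ∧ Exchangeable α N D ∧ A ⊆ D) : ANPE α N A := by
  obtain ⟨D, hD, hDe, hA⟩ := h
  exact anpe_iff.2 fun g hg => hD.not_le_zero (posi_wa_add_subset hD hDe hA hg)

lemma isLeast_posi_wa_add (h : ANPE α N A) :
    IsLeast {D | Coherent D ∧ Exchangeable α N D ∧ A ⊆ D}
      (posi (WA α N + ({f | 0 ≤ f ∧ f ≠ 0} ∪ A))) := by
  have hS := Set.subset_add_right ({f | 0 ≤ f ∧ f ≠ 0} ∪ A) (waSubmodule α N).zero_mem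
  refine ⟨⟨coherent_posi (Set.subset_union_left.trans hS) (anpe_iff.1 h),
    fun w hw g hg => add_mem_posi_add (waSubmodule α N) hw hg,
    Set.subset_union_right.trans (hS.trans subset_posi)⟩, ?_⟩
  rintro D ⟨hD, hDe, hA⟩
  exact posi_wa_add_subset hD hDe hA

lemma exnatex_eq_of_anpe (h : ANPE α N A) :
    exnatex α N A = posi (WA α N + ({f | 0 ≤ f ∧ f ≠ 0} ∪ A)) := by
  rw [exnatex, ← Set.sInf_eq_sInter]
  exact (isLeast_posi_wa_add h).isGLB.sInf_eq

lemma exists_of_exnatex_ne_univ (h : exnatex α N A ≠ Set.univ) :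
    ∃ D, Coherent D ∧ Exchangeable α N D ∧ A ⊆ D := by
  contrapose! h
  rw [exnatex, Set.sInter_eq_univ]
  exact fun D ⟨hD, hDe, hA⟩ => (h D hD hDe hA).elim

end Exchangeable

theorem exchangeable_natural_extension_general {N : ℕ}
    (A : Set ((Fin N → X) → ℝ)) :
    (ANPE X N A ↔
      ∃ D : Set ((Fin N → X) → ℝ), Coherent D ∧ Exchangeable X N D ∧ A ⊆ D) ∧
    (ANPE X N A ↔ exnatex X N A ≠ Set.univ) ∧
    (ANPE X N A ↔ Coherent (exnatex X N A) ∧ Exchangeable X N (exnatex X N A)) ∧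
    (ANPE X N A ↔
      Coherent (exnatex X N A) ∧ Exchangeable X N (exnatex X N A) ∧ A ⊆ exnatex X N A ∧
        ∀ D : Set ((Fin N → X) → ℝ), Coherent D → Exchangeable X N D → A ⊆ D →
          exnatex X N A ⊆ D) ∧
    (ANPE X N A →
      exnatex X N A = posi (WA X N + ({f : (Fin N → X) → ℝ | 0 ≤ f ∧ f ≠ 0} ∪ A)) ∧
      exnatex X N A = WA X N + natex A) := by
  have hleast := isLeast_posi_wa_add (A := A)
  have of_ne_univ : exnatex X N A ≠ Set.univ → ANPE X N A :=
    fun h => anpe_of_exists (exists_of_exnatex_ne_univ h)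
  refine ⟨⟨fun h => ⟨_, (hleast h).1⟩, anpe_of_exists⟩, ⟨fun h => ?_, of_ne_univ⟩,
    ⟨fun h => ?_, fun h => of_ne_univ h.1.ne_univ⟩,
    ⟨fun h => ?_, fun h => of_ne_univ h.1.ne_univ⟩, fun h => ?_⟩
  all_goals
    obtain ⟨⟨hD, hDe, hA⟩, hmin⟩ := hleast h
    rw [exnatex_eq_of_anpe h]
  · exact hD.ne_univ
  · exact ⟨hD, hDe⟩
  · exact ⟨hD, hDe, hA, fun D hD' hDe' hA' => hmin ⟨hD', hDe', hA'⟩⟩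
  · exact ⟨rfl, posi_add_eq (waSubmodule X N)⟩

theorem exchangeable_natural_extension {N : ℕ} (hN : 1 ≤ N)
    (A : Set ((Fin N → X) → ℝ)) :
    (ANPE X N A ↔
      ∃ D : Set ((Fin N → X) → ℝ), Coherent D ∧ Exchangeable X N D ∧ A ⊆ D) ∧
    (ANPE X N A ↔ exnatex X N A ≠ Set.univ) ∧
    (ANPE X N A ↔ Coherent (exnatex X N A) ∧ Exchangeable X N (exnatex X N A)) ∧
    (ANPE X N A ↔
      Coherent (exnatex X N A) ∧ Exchangeable X N (exnatex X N A) ∧ A ⊆ exnatex X N A ∧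
        ∀ D : Set ((Fin N → X) → ℝ), Coherent D → Exchangeable X N D → A ⊆ D →
          exnatex X N A ⊆ D) ∧
    (ANPE X N A →
      exnatex X N A = posi (WA X N + ({f : (Fin N → X) → ℝ | 0 ≤ f ∧ f ≠ 0} ∪ A)) ∧
      exnatex X N A = WA X N + natex A) :=
  exchangeable_natural_extension_general A
end
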